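/- Let K be a commutative semiring and π : Lit_A → K a K-interpretation such that for every literal L ∈ Lit_A, π(L)·π(¬L) = 0. Then for every first-order sentence φ, π⟦φ⟧·π⟦¬φ⟧ = 0. -/

import Mathlib

/-- A finite relational vocabulary: a type of relation symbols with arities. -/
structure Vocab : Type 1 where
  Rel : Type
  arity : Rel → ℕ

/-- First-order formulas over a relational vocabulary `𝒱` (with equality),
with variables from `Vars`.  Negated atoms are included as primitive literals. -/
inductive Formula (𝒱 : Vocab) (Vars : Type) : Type where
  | rel    : (R : 𝒱.Rel) → (Fin (𝒱.arity R) → Vars) → Formula 𝒱 Vars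
  | nrel   : (R : 𝒱.Rel) → (Fin (𝒱.arity R) → Vars) → Formula 𝒱 Vars
  | equal  : Vars → Vars → Formula 𝒱 Vars
  | nequal : Vars → Vars → Formula 𝒱 Vars
  | and    : Formula 𝒱 Vars → Formula 𝒱 Vars → Formula 𝒱 Vars
  | or     : Formula 𝒱 Vars → Formula 𝒱 Vars → Formula 𝒱 Vars
  | all    : Vars → Formula 𝒱 Vars → Formula 𝒱 Vars
  | ex     : Vars → Formula 𝒱 Vars → Formula 𝒱 Vars
  | not    : Formula 𝒱 Vars → Formula 𝒱 Vars

/-- A ground literal over vocabulary `𝒱` and universe `A`: a positive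
(`pos = true`) or negated (`pos = false`) ground atom `R(ā)`. -/
structure Lit (𝒱 : Vocab) (A : Type) where
  pos : Bool
  R : 𝒱.Rel
  args : Fin (𝒱.arity R) → A

/-- Negation of a literal (the negation of a literal is again a literal). -/
def Lit.neg {𝒱 : Vocab} {A : Type} (L : Lit 𝒱 A) : Lit 𝒱 A := ⟨!L.pos, L.R, L.args⟩

namespace Formula

variable {𝒱 : Vocab} {Vars : Type}

/-- Size of a formula (used for termination of the semiring semantics). -/
def size : Formula 𝒱 Vars → ℕ
  | rel _ _ => 1
  | nrel _ _ => 1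
  | equal _ _ => 1
  | nequal _ _ => 1
  | and φ ψ => φ.size + ψ.size + 1
  | or φ ψ => φ.size + ψ.size + 1
  | all _ φ => φ.size + 1
  | ex _ φ => φ.size + 1
  | not φ => φ.size + 1

mutual
/-- Negation normal form of a formula. -/
def nnf : Formula 𝒱 Vars → Formula 𝒱 Vars
  | rel R v => rel R v
  | nrel R v => nrel R v
  | equal x y => equal x y
  | nequal x y => nequal x y
  | and φ ψ => and φ.nnf ψ.nnf
  | or φ ψ => or φ.nnf ψ.nnf
  | all x φ => all x φ.nnf
  | ex x φ => ex x φ.nnf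
  | not φ => nnfNeg φ

/-- Negation normal form of the negation of a formula: `nnfNeg φ = nnf (¬φ)`. -/
def nnfNeg : Formula 𝒱 Vars → Formula 𝒱 Vars
  | rel R v => nrel R v
  | nrel R v => rel R v
  | equal x y => nequal x y
  | nequal x y => equal x y
  | and φ ψ => or (nnfNeg φ) (nnfNeg ψ)
  | or φ ψ => and (nnfNeg φ) (nnfNeg ψ)
  | all x φ => ex x (nnfNeg φ)
  | ex x φ => all x (nnfNeg φ)
  | not φ => nnf φ
end

theorem size_nnf_le (φ : Formula 𝒱 Vars) : φ.nnf.size ≤ φ.size ∧ (nnfNeg φ).size ≤ φ.size := by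
  induction φ <;> simp_all [nnf, nnfNeg, size] <;> omega

/-- Free variables of a formula. -/
def FV [DecidableEq Vars] : Formula 𝒱 Vars → Finset Vars
  | rel _ v => Finset.image v Finset.univ
  | nrel _ v => Finset.image v Finset.univ
  | equal x y => {x, y}
  | nequal x y => {x, y}
  | and φ ψ => φ.FV ∪ ψ.FV
  | or φ ψ => φ.FV ∪ ψ.FV
  | all x φ => φ.FV.erase x
  | ex x φ => φ.FV.erase x
  | not φ => φ.FV

end Formula

section Semantics

variable {𝒱 : Vocab} {Vars A K : Type} [DecidableEq Vars] [Fintype A] [DecidableEq A]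
  [CommSemiring K]

/-- The extension of a `K`-interpretation `π : Lit 𝒱 A → K` to first-order formulas,
relative to a valuation `ν : Vars → A`:  `eval π φ ν = π⟦φ⟧ν`. -/
def eval (π : Lit 𝒱 A → K) : Formula 𝒱 Vars → (Vars → A) → K
  | .rel R v, ν => π ⟨true, R, fun i => ν (v i)⟩
  | .nrel R v, ν => π ⟨false, R, fun i => ν (v i)⟩
  | .equal x y, ν => if ν x = ν y then 1 else 0
  | .nequal x y, ν => if ν x ≠ ν y then 1 else 0
  | .and φ ψ, ν => eval π φ ν * eval π ψ ν
  | .or φ ψ, ν => eval π φ ν + eval π ψ ν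
  | .all x φ, ν => ∏ a : A, eval π φ (Function.update ν x a)
  | .ex x φ, ν => ∑ a : A, eval π φ (Function.update ν x a)
  | .not φ, ν => eval π (Formula.nnfNeg φ) ν
termination_by φ _ => φ.size
decreasing_by
  all_goals simp [Formula.size]
  all_goals first
    | omega
    | exact Nat.lt_succ_of_le (Formula.size_nnf_le _).2
    | exact (Formula.size_nnf_le _).2

end Semantics

/-- A `𝒱`-structure with universe `A`: an interpretation of each relation symbol. -/
def Struc (𝒱 : Vocab) (A : Type) := (R : 𝒱.Rel) → (Fin (𝒱.arity R) → A) → Prop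

/-- Standard (Tarski) satisfaction of a literal in a structure. -/
def Struc.SatLit {𝒱 : Vocab} {A : Type} (𝔄 : Struc 𝒱 A) (L : Lit 𝒱 A) : Prop :=
  if L.pos then 𝔄 L.R L.args else ¬ 𝔄 L.R L.args

section Sat

variable {𝒱 : Vocab} {Vars A : Type} [DecidableEq Vars]

/-- Standard (Tarski) satisfaction relation `𝔄 ⊨ φ[ν]`. -/
def Sat (𝔄 : Struc 𝒱 A) : Formula 𝒱 Vars → (Vars → A) → Prop
  | .rel R v, ν => 𝔄 R (fun i => ν (v i))
  | .nrel R v, ν => ¬ 𝔄 R (fun i => ν (v i))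
  | .equal x y, ν => ν x = ν y
  | .nequal x y, ν => ν x ≠ ν y
  | .and φ ψ, ν => Sat 𝔄 φ ν ∧ Sat 𝔄 ψ ν
  | .or φ ψ, ν => Sat 𝔄 φ ν ∨ Sat 𝔄 ψ ν
  | .all x φ, ν => ∀ a : A, Sat 𝔄 φ (Function.update ν x a)
  | .ex x φ, ν => ∃ a : A, Sat 𝔄 φ (Function.update ν x a)
  | .not φ, ν => ¬ Sat 𝔄 φ ν

end Sat

section ModelDefining

variable {𝒱 : Vocab} {A K : Type} [CommSemiring K]

/-- A `K`-interpretation is model-defining if for each fact exactly one of the values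
assigned to it and to its negation is `0`. -/
def ModelDefining (π : Lit 𝒱 A → K) : Prop :=
  ∀ L : Lit 𝒱 A, (π L = 0 ∧ π L.neg ≠ 0) ∨ (π L ≠ 0 ∧ π L.neg = 0)

/-- The structure `𝔄_π` defined by a model-defining interpretation `π`:
it satisfies a literal `L` iff `π L ≠ 0`. -/
def StrucOf (π : Lit 𝒱 A → K) : Struc 𝒱 A := fun R a => π ⟨true, R, a⟩ ≠ 0

end ModelDefining

/-- A commutative semiring is positive if it is `+`-positive and has no divisors of zero. -/
def IsPositive (K : Type) [CommSemiring K] : Prop :=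
  (∀ a b : K, a + b = 0 → a = 0 ∧ b = 0) ∧ ∀ a b : K, a * b = 0 → a = 0 ∨ b = 0


/-!
By induction on `φ`, `π⟦φ⟧ν · π⟦nnf(¬φ)⟧ν = 0` for every formula and valuation. The
connectives are taken care of by identities valid in any commutative semiring: if
`a a' = 0` and `b b' = 0` then `(a b)(a' + b') = 0` and `(a + b)(a' b') = 0`, and if
`f i · g i = 0` for all `i` then `(∏ f)(∑ g) = 0` and `(∑ f)(∏ g) = 0`.
-/

section OrthogonalProducts

variable {R ι : Type*} [CommSemiring R]

theorem mul_mul_add_eq_zero {a a' b b' : R} (ha : a * a' = 0) (hb : b * b' = 0) :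
    a * b * (a' + b') = 0 := by
  rw [mul_add, mul_right_comm, ha, zero_mul, zero_add, mul_assoc, hb, mul_zero]

theorem add_mul_mul_eq_zero {a a' b b' : R} (ha : a * a' = 0) (hb : b * b' = 0) :
    (a + b) * (a' * b') = 0 := by
  rw [mul_comm, mul_mul_add_eq_zero (by rwa [mul_comm]) (by rwa [mul_comm])]

theorem Finset.prod_mul_sum_eq_zero {s : Finset ι} {f g : ι → R}
    (h : ∀ i ∈ s, f i * g i = 0) : (∏ i ∈ s, f i) * ∑ i ∈ s, g i = 0 := by
  rw [Finset.mul_sum]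
  refine Finset.sum_eq_zero fun i hi => ?_
  obtain ⟨c, hc⟩ := Finset.dvd_prod_of_mem f hi
  rw [hc, mul_right_comm, h i hi, zero_mul]

theorem Finset.sum_mul_prod_eq_zero {s : Finset ι} {f g : ι → R}
    (h : ∀ i ∈ s, f i * g i = 0) : (∑ i ∈ s, f i) * ∏ i ∈ s, g i = 0 := by
  rw [mul_comm, Finset.prod_mul_sum_eq_zero fun i hi => by rw [mul_comm, h i hi]]

end OrthogonalProducts

section Consistency

variable {𝒱 : Vocab} {Vars A K : Type} [DecidableEq Vars] [Fintype A] [DecidableEq A]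
  [CommSemiring K] (π : Lit 𝒱 A → K)

theorem eval_not (φ : Formula 𝒱 Vars) (ν : Vars → A) :
    eval π (.not φ) ν = eval π φ.nnfNeg ν := by
  rw [eval]

theorem eval_nnf (φ : Formula 𝒱 Vars) (ν : Vars → A) : eval π φ.nnf ν = eval π φ ν := by
  induction φ generalizing ν <;> simp_all [Formula.nnf, eval]

theorem eval_mul_eval_nnfNeg_eq_zero (hπ : ∀ L : Lit 𝒱 A, π L * π L.neg = 0)
    (φ : Formula 𝒱 Vars) (ν : Vars → A) : eval π φ ν * eval π φ.nnfNeg ν = 0 := by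
  induction φ generalizing ν with
  | rel R v | nrel R v =>
    simp only [eval, Formula.nnfNeg]
    exact hπ _
  | equal x y | nequal x y =>
    simp only [eval, Formula.nnfNeg]
    split_ifs <;> simp_all
  | and φ ψ ihφ ihψ =>
    simp only [eval, Formula.nnfNeg]
    exact mul_mul_add_eq_zero (ihφ ν) (ihψ ν)
  | or φ ψ ihφ ihψ =>
    simp only [eval, Formula.nnfNeg]
    exact add_mul_mul_eq_zero (ihφ ν) (ihψ ν)
  | all x φ ih =>
    simp only [eval, Formula.nnfNeg]
    exact Finset.prod_mul_sum_eq_zero fun a _ => ih _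
  | ex x φ ih =>
    simp only [eval, Formula.nnfNeg]
    exact Finset.sum_mul_prod_eq_zero fun a _ => ih _
  | not φ ih =>
    rw [eval_not, Formula.nnfNeg, eval_nnf, mul_comm]
    exact ih ν

end Consistency

/-- "consistency", product form: if `π(L)·π(¬L) = 0` for every literal
`L`, then `π⟦φ⟧·π⟦¬φ⟧ = 0` for every sentence `φ`. -/
theorem eval_mul_eval_not_eq_zero {𝒱 : Vocab} {Vars A K : Type} [DecidableEq Vars]
    [Fintype A] [DecidableEq A] [Nonempty A] [CommSemiring K]
    (π : Lit 𝒱 A → K) (hπ : ∀ L : Lit 𝒱 A, π L * π L.neg = 0)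
    (φ : Formula 𝒱 Vars) (hφ : φ.FV = ∅) (ν : Vars → A) :
    eval π φ ν * eval π (Formula.not φ) ν = 0 := by
  rw [eval_not]
  exact eval_mul_eval_nnfNeg_eq_zero π hπ φ ν
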